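/- (Deterministic core of the guarantee for greedy on the pruned set.) Let V be a finite set and f : 2^V → ℝ a normalized, monotone, submodular set function. Let k ≥ 1, ε ≥ 0, let S* ⊆ V with |S*| ≤ k, let V* ⊆ V, and let V' ⊆ V with |V'| ≥ k. Let S_0 = ∅, S_1, …, S_k ⊆ V' be a greedy sequence in V': for each i < k there is u_i ∈ V'∖S_i with S_{i+1} = S_i∪{u_i} and f(u_i|S_i) ≥ f(x|S_i) for all x ∈ V'∖S_i. Assume: (a) for every v ∈ V∖V*, min_{y∈V*} w_{yv} ≤ ε; and (b) for each i < k and each v ∈ V∖(V'∪S_i) there exists x ∈ V'∖S_i with w_{xv} ≤ 2·min_{y∈V*} w_{yv}. Then f(S_k) ≥ (1 − e^{−1})·(f(S*) − 2kε). -/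
import Mathlib


open Finset

variable {α : Type*}

/-- `f` is submodular on subsets of the ground set `V`. -/
def Submod [DecidableEq α] (V : Finset α) (f : Finset α → ℝ) : Prop :=
  ∀ A B : Finset α, A ⊆ B → B ⊆ V → ∀ v ∈ V, v ∉ B →
    f (insert v B) - f B ≤ f (insert v A) - f A

/-- Marginal gain `f(v|S) = f(S ∪ {v}) - f(S)`. -/
def gain [DecidableEq α] (f : Finset α → ℝ) (v : α) (S : Finset α) : ℝ :=
  f (insert v S) - f S

/-- Submodularity-graph edge weight `w_{uv} = f(v|u) - f(u|V∖u)`. -/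
def w [DecidableEq α] (f : Finset α → ℝ) (V : Finset α) (u v : α) : ℝ :=
  gain f v {u} - gain f u (V.erase u)

/-- Conditional edge weight `w_{uv|S} = f(v|S ∪ {u}) - f(u|V∖u)`. -/
def wS [DecidableEq α] (f : Finset α → ℝ) (V S : Finset α) (u v : α) : ℝ :=
  gain f v (insert u S) - gain f u (V.erase u)

lemma gain_nonneg' [DecidableEq α] {V : Finset α} {f : Finset α → ℝ}
    (hmono : ∀ A B : Finset α, A ⊆ B → B ⊆ V → f A ≤ f B)
    {v : α} (hv : v ∈ V) {T : Finset α} (hT : T ⊆ V) : 0 ≤ gain f v T := by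
  have := hmono T (insert v T) (Finset.subset_insert _ _) (Finset.insert_subset hv hT)
  unfold gain; linarith

lemma sum_gain_bound' [DecidableEq α] {V : Finset α} {f : Finset α → ℝ}
    (hsub : Submod V f) (hmono : ∀ A B : Finset α, A ⊆ B → B ⊆ V → f A ≤ f B)
    {S : Finset α} (hS : S ⊆ V) :
    ∀ T : Finset α, T ⊆ V → f (S ∪ T) ≤ f S + ∑ v ∈ T, gain f v S := by
  intro T
  induction T using Finset.induction_on with
  | empty => simp
  | @insert a T ha ih =>
    intro hT
    have haV : a ∈ V := hT (mem_insert_self a T)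
    have hTV : T ⊆ V := (Finset.subset_insert a T).trans hT
    have hIH := ih hTV
    rw [Finset.sum_insert ha]
    have h1 : S ∪ insert a T = insert a (S ∪ T) := by
      rw [Finset.union_insert]
    by_cases haST : a ∈ S ∪ T
    · rw [h1, Finset.insert_eq_self.mpr haST]
      have hg : 0 ≤ gain f a S := gain_nonneg' hmono haV hS
      linarith
    · have h2 : f (insert a (S ∪ T)) - f (S ∪ T) ≤ f (insert a S) - f S :=
        hsub S (S ∪ T) Finset.subset_union_left (Finset.union_subset hS hTV) a haV haST
      rw [h1]
      unfold gain at *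
      linarith

lemma exchange' [DecidableEq α] {V : Finset α} {f : Finset α → ℝ}
    (hsub : Submod V f) {S : Finset α} (hS : S ⊆ V)
    {x v : α} (hx : x ∈ V) (hv : v ∈ V) (hxS : x ∉ S) (hvS : v ∉ S) (hxv : x ≠ v) :
    gain f v S ≤ gain f x S + w f V x v := by
  have hvSx : insert v S ⊆ V.erase x := by
    apply Finset.insert_subset (Finset.mem_erase.mpr ⟨hxv.symm, hv⟩)
    intro a haS
    exact Finset.mem_erase.mpr ⟨fun h => hxS (h ▸ haS), hS haS⟩
  have h1 : f (insert x (V.erase x)) - f (V.erase x) ≤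
      f (insert x (insert v S)) - f (insert v S) :=
    hsub (insert v S) (V.erase x) hvSx (Finset.erase_subset x V) x hx
      (Finset.notMem_erase x V)
  have h2 : f (insert v (insert x S)) - f (insert x S) ≤ f (insert v {x}) - f {x} :=
    hsub {x} (insert x S) (Finset.singleton_subset_iff.mpr (mem_insert_self x S))
      (Finset.insert_subset hx hS) v hv
      (by intro hmem
          rcases Finset.mem_insert.mp hmem with h | h
          · exact hxv h.symm
          · exact hvS h)
  rw [Finset.insert_comm] at h1
  unfold w gain
  linarith

theorem stmt_17 [DecidableEq α] (V : Finset α) (f : Finset α → ℝ)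
    (hsub : Submod V f) (hmono : ∀ A B : Finset α, A ⊆ B → B ⊆ V → f A ≤ f B)
    (hnorm : f ∅ = 0)
    (k : ℕ) (hk : 1 ≤ k) (ε : ℝ) (hε : 0 ≤ ε)
    (Sstar : Finset α) (hSstarV : Sstar ⊆ V) (hSstarcard : Sstar.card ≤ k)
    (Vstar : Finset α) (hVstarV : Vstar ⊆ V) (hVstarne : Vstar.Nonempty)
    (V' : Finset α) (hV'V : V' ⊆ V) (hV'card : k ≤ V'.card)
    (S : ℕ → Finset α) (u : ℕ → α)
    (hS0 : S 0 = ∅) (hSsub : ∀ i ≤ k, S i ⊆ V')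
    (hgreedy : ∀ i < k, u i ∈ V' \ S i ∧ S (i + 1) = insert (u i) (S i) ∧
      ∀ x ∈ V' \ S i, gain f x (S i) ≤ gain f (u i) (S i))
    (ha : ∀ v ∈ V \ Vstar, Vstar.inf' hVstarne (fun y => w f V y v) ≤ ε)
    (hb : ∀ i < k, ∀ v ∈ V \ (V' ∪ S i), ∃ x ∈ V' \ S i,
      w f V x v ≤ 2 * Vstar.inf' hVstarne (fun y => w f V y v)) :
    f (S k) ≥ (1 - Real.exp (-1)) * (f Sstar - 2 * (k : ℝ) * ε) := by
  have hk0 : (0:ℝ) < (k:ℝ) := by exact_mod_cast hk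
  -- the inf' is at most ε for every v ∈ V
  have hinf : ∀ v ∈ V, Vstar.inf' hVstarne (fun y => w f V y v) ≤ ε := by
    intro v hv
    by_cases hvV : v ∈ Vstar
    · have h1 : Vstar.inf' hVstarne (fun y => w f V y v) ≤ w f V v v :=
        Finset.inf'_le _ hvV
      have h2 : w f V v v ≤ 0 := by
        unfold w gain
        have hins : insert v (V.erase v) = V := Finset.insert_erase hv
        have hm : f (V.erase v) ≤ f V := hmono _ _ (Finset.erase_subset v V) le_rfl
        have : insert v ({v} : Finset α) = {v} := by simp
        rw [this, hins]
        linarith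
      linarith
    · exact ha v (Finset.mem_sdiff.mpr ⟨hv, hvV⟩)
  -- key per-step bound
  have hstep0 : ∀ i < k, f Sstar ≤ f (S i) + (k:ℝ) * (gain f (u i) (S i) + 2*ε) := by
    intro i hi
    obtain ⟨hui, hSsucc, hmax⟩ := hgreedy i hi
    have hSiV' : S i ⊆ V' := hSsub i (le_of_lt hi)
    have hSiV : S i ⊆ V := hSiV'.trans hV'V
    have huiV : u i ∈ V := hV'V (Finset.mem_sdiff.mp hui).1
    have hg0 : 0 ≤ gain f (u i) (S i) := gain_nonneg' hmono huiV hSiV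
    have helem : ∀ v ∈ Sstar, gain f v (S i) ≤ gain f (u i) (S i) + 2*ε := by
      intro v hvS
      have hvV : v ∈ V := hSstarV hvS
      by_cases hvSi : v ∈ S i
      · have : gain f v (S i) = 0 := by
          unfold gain; rw [Finset.insert_eq_self.mpr hvSi]; ring
        linarith
      · by_cases hvV' : v ∈ V'
        · have := hmax v (Finset.mem_sdiff.mpr ⟨hvV', hvSi⟩)
          linarith
        · obtain ⟨x, hx, hw⟩ := hb i hi v
            (Finset.mem_sdiff.mpr ⟨hvV, by simp [Finset.mem_union, hvV', hvSi]⟩)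
          obtain ⟨hxV', hxSi⟩ := Finset.mem_sdiff.mp hx
          have hxV : x ∈ V := hV'V hxV'
          have hxv : x ≠ v := fun h => hvV' (h ▸ hxV')
          have hex := exchange' hsub hSiV hxV hvV hxSi hvSi hxv
          have hwv : w f V x v ≤ 2*ε := by
            have := hinf v hvV
            linarith
          have := hmax x hx
          linarith
    have h1 : f Sstar ≤ f (S i ∪ Sstar) :=
      hmono _ _ Finset.subset_union_right
        (Finset.union_subset hSiV hSstarV)
    have h2 := sum_gain_bound' hsub hmono hSiV Sstar hSstarV
    have h3 : ∑ v ∈ Sstar, gain f v (S i) ≤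
        (Sstar.card : ℝ) * (gain f (u i) (S i) + 2*ε) := by
      have := Finset.sum_le_card_nsmul Sstar (fun v => gain f v (S i))
        (gain f (u i) (S i) + 2*ε) (fun v hv => helem v hv)
      rw [mul_add]
      simpa [nsmul_eq_mul, mul_add] using this
    have h4 : (Sstar.card : ℝ) * (gain f (u i) (S i) + 2*ε) ≤
        (k:ℝ) * (gain f (u i) (S i) + 2*ε) := by
      apply mul_le_mul_of_nonneg_right _ (by linarith)
      exact_mod_cast hSstarcard
    linarith
  set c : ℝ := 1 - 1/(k:ℝ) with hc
  have hc0 : 0 ≤ c := by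
    rw [hc]
    have : 1/(k:ℝ) ≤ 1 := by
      rw [div_le_one hk0]; exact_mod_cast hk
    linarith
  have hstep : ∀ i < k, f Sstar - 2*(k:ℝ)*ε - f (S (i+1)) ≤
      c * (f Sstar - 2*(k:ℝ)*ε - f (S i)) := by
    intro i hi
    obtain ⟨hui, hSsucc, hmax⟩ := hgreedy i hi
    have h1 := hstep0 i hi
    have h2 : f (S (i+1)) = f (S i) + gain f (u i) (S i) := by
      rw [hSsucc]; unfold gain; ring
    have h3 : (f Sstar - 2*(k:ℝ)*ε - f (S i)) / (k:ℝ) ≤ gain f (u i) (S i) := by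
      rw [div_le_iff₀ hk0]
      nlinarith
    have h4 : c * (f Sstar - 2*(k:ℝ)*ε - f (S i)) =
        (f Sstar - 2*(k:ℝ)*ε - f (S i)) - (f Sstar - 2*(k:ℝ)*ε - f (S i)) / (k:ℝ) := by
      rw [hc]; field_simp
    have h5 : f Sstar - 2*(k:ℝ)*ε - f (S (i+1)) =
        (f Sstar - 2*(k:ℝ)*ε - f (S i)) - gain f (u i) (S i) := by
      rw [h2]; ring
    rw [h5, h4]
    linarith
  have hind : ∀ i, i ≤ k → f Sstar - 2*(k:ℝ)*ε - f (S i) ≤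
      c^i * (f Sstar - 2*(k:ℝ)*ε - f (S 0)) := by
    intro i
    induction i with
    | zero => intro _; simp
    | succ n ih =>
      intro h
      have hnk : n < k := h
      have h1 := hstep n hnk
      have h2 := ih (le_of_lt hnk)
      have h3 := mul_le_mul_of_nonneg_left h2 hc0
      rw [pow_succ', mul_assoc]
      linarith
  have hΔ0 : f Sstar - 2*(k:ℝ)*ε - f (S 0) = f Sstar - 2*(k:ℝ)*ε := by
    rw [hS0, hnorm]; ring
  have hck : c^k ≤ Real.exp (-1) := by
    have h1 : c ≤ Real.exp (-1/(k:ℝ)) := by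
      calc c = -1/(k:ℝ) + 1 := by rw [hc]; ring
        _ ≤ Real.exp (-1/(k:ℝ)) := Real.add_one_le_exp _
    have h2 : c^k ≤ (Real.exp (-1/(k:ℝ)))^k := pow_le_pow_left₀ hc0 h1 k
    have h3 : (Real.exp (-1/(k:ℝ)))^k = Real.exp ((k:ℝ) * (-1/(k:ℝ))) :=
      (Real.exp_nat_mul _ k).symm
    have h4 : (k:ℝ) * (-1/(k:ℝ)) = -1 := by field_simp
    rw [h3, h4] at h2
    exact h2
  have hfin := hind k le_rfl
  rw [hΔ0] at hfin
  by_cases hpos : 0 ≤ f Sstar - 2*(k:ℝ)*ε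
  · have : c^k * (f Sstar - 2*(k:ℝ)*ε) ≤ Real.exp (-1) * (f Sstar - 2*(k:ℝ)*ε) :=
      mul_le_mul_of_nonneg_right hck hpos
    have hgoal : (1 - Real.exp (-1)) * (f Sstar - 2*(k:ℝ)*ε) ≤ f (S k) := by nlinarith
    linarith [hgoal]
  · have h0 : 0 ≤ f (S k) := by
      have := hmono ∅ (S k) (Finset.empty_subset _) ((hSsub k le_rfl).trans hV'V)
      rw [hnorm] at this; exact this
    have he1 : Real.exp (-1) ≤ 1 := by
      have := Real.exp_le_exp.mpr (by norm_num : (-1:ℝ) ≤ 0)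
      rwa [Real.exp_zero] at this
    push_neg at hpos
    nlinarith
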